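/- Let 0 < n < d be integers and c₁, κ > 0. There is ε₀ = ε₀(n,d,c₁,κ) > 0 with the following property. Let μ be a Borel measure on ℝ^d with closed support E, let x₀ ∈ E, r > 0, let L ⊂ ℝ^d be an n-dimensional affine subspace, let c ≥ c₁, and suppose d_{B(x₀,4r)}(μ, c ℋⁿ|_L) ≤ ε (2r)^{n+1} with 0 ≤ ε ≤ ε₀. If x ∈ B(x₀, r) satisfies dist(x, E) ≥ κ r, then dist(x, L) ≥ κ r / 2; in particular B(x, κr/2) ∩ L = ∅. -/

import Mathlib

open MeasureTheory Metric Set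
open scoped ENNReal NNReal

noncomputable section

abbrev Euc (d : ℕ) := EuclideanSpace ℝ (Fin d)

/-- The closed support of a Borel measure on `ℝ^d`. -/
def msupport {d : ℕ} (μ : Measure (Euc d)) : Set (Euc d) :=
  {x | ∀ r > 0, 0 < μ (Metric.ball x r)}

/-- `L` is an `n`-dimensional affine subspace (an `n`-plane) of `ℝ^d`. -/
def IsNPlane {d : ℕ} (n : ℕ) (L : Set (Euc d)) : Prop :=
  ∃ W : AffineSubspace ℝ (Euc d), (W : Set (Euc d)) = L ∧ Module.finrank ℝ W.direction = n

/-- `μ` is `n`-Ahlfors–David regular with constant `A` and (unbounded) support `E`. -/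
def IsADRWith {d : ℕ} (n : ℕ) (A : ℝ) (μ : Measure (Euc d)) (E : Set (Euc d)) : Prop :=
  1 ≤ A ∧ msupport μ = E ∧ ¬ Bornology.IsBounded E ∧
    ∀ x ∈ E, ∀ r : ℝ, 0 < r →
      ENNReal.ofReal (A⁻¹ * r ^ n) ≤ μ (closedBall x r) ∧
      μ (closedBall x r) ≤ ENNReal.ofReal (A * r ^ n)

/-- `μ` is `n`-uniformly rectifiable: `n`-ADR plus big pieces of Lipschitz images
(with BPLI constants `θ`, `M`). -/
def IsURWith {d : ℕ} (n : ℕ) (A θ M : ℝ) (μ : Measure (Euc d)) (E : Set (Euc d)) : Prop :=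
  IsADRWith n A μ E ∧ 0 < θ ∧ 0 < M ∧
    ∀ x ∈ E, ∀ r : ℝ, 0 < r →
      ∃ g : EuclideanSpace ℝ (Fin n) → Euc d, LipschitzWith (Real.toNNReal M) g ∧
        ENNReal.ofReal (θ * r ^ n) ≤ μ (closedBall x r ∩ g '' (closedBall 0 r))

/-- `S` belongs to the kernel class `K_{n+β}(ℝ^d)` with constant `A`:
size bound `|S(x,y)| ≤ A|x-y|^{-(n+β)}` and Lipschitz-in-`y` bound
`|S(x,y) - S(x,y')| ≤ A|y-y'| |x-y|^{-(n+β+1)}` for `|y-y'| ≤ |x-y|/2`. -/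
def IsCZKernel {d : ℕ} (n : ℕ) (β A : ℝ) (S : Euc d → Euc d → ℝ) : Prop :=
  (∀ x y : Euc d, x ≠ y → |S x y| ≤ A / dist x y ^ ((n : ℝ) + β)) ∧
  (∀ x y y' : Euc d, x ≠ y → dist y y' ≤ dist x y / 2 →
    |S x y - S x y'| ≤ A * dist y y' / dist x y ^ ((n : ℝ) + β + 1))

/-! If `dist(x, L) < κr/2`, pick `p ∈ L` with `|x - p| < κr/2` and test the hypothesis against
the tent `f = (κr/2 - |· - p|)⁺`. It is 1-Lipschitz, supported in `B(x₀, 4r)` and vanishes on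
`E`, so `∫ f dμ = 0`; but `f ≥ κr/4` on the `n`-disc `L ∩ B(p, κr/4)`, so
`c ∫_L f dℋⁿ ≥ c₁ (κr/4)^{n+1} ω_n`, where `ω_n` is the `ℋⁿ`-measure of the unit ball of `ℝⁿ`.
With `ε₀ = c₁ (κ/8)^{n+1} ω_n / 2` this exceeds `ε (2r)^{n+1}`. -/

section TentFunction

variable {X : Type*} [PseudoMetricSpace X]

def tentFunction (p : X) (a : ℝ) (y : X) : ℝ := max (a - dist y p) 0

variable {p y : X} {a : ℝ}

lemma tentFunction_nonneg : 0 ≤ tentFunction p a y := le_max_right _ _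

lemma tentFunction_le (ha : 0 ≤ a) : tentFunction p a y ≤ a :=
  max_le (by linarith [dist_nonneg (x := y) (y := p)]) ha

lemma tentFunction_eq_zero (h : a ≤ dist y p) : tentFunction p a y = 0 :=
  max_eq_right (by linarith)

lemma half_le_tentFunction (h : dist y p ≤ a / 2) : a / 2 ≤ tentFunction p a y :=
  le_max_of_le_left (by linarith)

lemma lipschitzWith_tentFunction (p : X) (a : ℝ) : LipschitzWith 1 (tentFunction p a) := by
  have h := ((LipschitzWith.const a).sub (LipschitzWith.dist_left p)).max_const 0
  rwa [zero_add] at h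

lemma tsupport_tentFunction_subset (p : X) (a : ℝ) : tsupport (tentFunction p a) ⊆ closedBall p a :=
  closure_minimal (fun _ hy => not_lt.mp fun hya => hy (tentFunction_eq_zero hya.le))
    isClosed_closedBall

end TentFunction

-- `isAddHaarMeasure_hausdorffMeasure` is indexed by `finrank`, which is not syntactically `n`.
instance (n : ℕ) : (μH[(n : ℝ)] : Measure (EuclideanSpace ℝ (Fin n))).IsAddHaarMeasure := by
  simpa using isAddHaarMeasure_hausdorffMeasure (E := EuclideanSpace ℝ (Fin n))

def unitBallHausdorffVolume (n : ℕ) : ℝ :=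
  (μH[(n : ℝ)] : Measure (EuclideanSpace ℝ (Fin n))).real (ball 0 1)

lemma unitBallHausdorffVolume_pos (n : ℕ) : 0 < unitBallHausdorffVolume n :=
  ENNReal.toReal_pos (measure_ball_pos _ _ one_pos).ne' measure_ball_lt_top.ne

section AffineSubspace

variable {E : Type*} [NormedAddCommGroup E] [InnerProductSpace ℝ E] {W : AffineSubspace ℝ E}
  {p : E} {n : ℕ}

lemma AffineSubspace.image_add_closedBall (hp : p ∈ W) (R : ℝ) :
    (fun v : W.direction => (v : E) + p) '' closedBall 0 R = (W : Set E) ∩ closedBall p R := by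
  ext y
  constructor
  · rintro ⟨v, hv, rfl⟩
    exact ⟨W.vadd_mem_of_mem_direction v.2 hp, by simpa using hv⟩
  · rintro ⟨hy, hyR⟩
    exact ⟨⟨y - p, W.vsub_mem_direction hy hp⟩, by simpa [dist_eq_norm] using hyR, by simp⟩

lemma AffineSubspace.hausdorffMeasure_inter_closedBall [MeasurableSpace E] [BorelSpace E]
    [FiniteDimensional ℝ W.direction] (hW : Module.finrank ℝ W.direction = n) (hp : p ∈ W) {R : ℝ} (hR : 0 ≤ R) :
    μH[(n : ℝ)] ((W : Set E) ∩ closedBall p R)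
      = ENNReal.ofReal (R ^ n) * μH[(n : ℝ)] (ball (0 : EuclideanSpace ℝ (Fin n)) 1) := by
  let e : W.direction ≃ₗᵢ[ℝ] EuclideanSpace ℝ (Fin n) :=
    ((stdOrthonormalBasis ℝ W.direction).reindex (finCongr hW)).repr
  have hφ : Isometry fun v : EuclideanSpace ℝ (Fin n) => ((e.symm v : W.direction) : E) + p :=
    (IsometryEquiv.addRight p).isometry.comp (W.direction.subtypeₗᵢ.isometry.comp e.symm.isometry)
  rw [← W.image_add_closedBall hp, ← map_zero e.symm, ← e.symm.image_closedBall, image_image,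
    hφ.hausdorffMeasure_image (Or.inl n.cast_nonneg), Measure.addHaar_closedBall _ _ hR,
    finrank_euclideanSpace_fin]

lemma AffineSubspace.half_pow_mul_le_setIntegral_tentFunction [MeasurableSpace E]
    [BorelSpace E] [FiniteDimensional ℝ W.direction] (hW : Module.finrank ℝ W.direction = n)
    (hp : p ∈ W) {a : ℝ} (ha : 0 ≤ a) :
    (a / 2) ^ (n + 1) * unitBallHausdorffVolume n
      ≤ ∫ y in (W : Set E), tentFunction p a y ∂μH[(n : ℝ)] := by
  have hWm : MeasurableSet (W : Set E) := W.closed_of_finiteDimensional.measurableSet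
  have hfin : ∀ {R : ℝ}, 0 ≤ R → μH[(n : ℝ)] ((W : Set E) ∩ closedBall p R) ≠ ∞ := fun hR => by
    rw [W.hausdorffMeasure_inter_closedBall hW hp hR]
    exact ENNReal.mul_ne_top ENNReal.ofReal_ne_top measure_ball_lt_top.ne
  have hint : IntegrableOn (tentFunction p a) W μH[(n : ℝ)] := by
    refine (Measure.integrableOn_of_bounded (M := a) (hfin ha)
      (lipschitzWith_tentFunction p a).continuous.aestronglyMeasurable ?_).of_forall_sdiff_eq_zero
      hWm fun y hy => tentFunction_eq_zero ?_
    · filter_upwards with y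
      rw [Real.norm_of_nonneg tentFunction_nonneg]
      exact tentFunction_le ha
    · exact (not_le.mp fun h => hy.2 ⟨hy.1, h⟩).le
  calc (a / 2) ^ (n + 1) * unitBallHausdorffVolume n
      = a / 2 * μH[(n : ℝ)].real ((W : Set E) ∩ closedBall p (a / 2)) := by
        rw [measureReal_def, W.hausdorffMeasure_inter_closedBall hW hp (by positivity),
          ENNReal.toReal_mul, ENNReal.toReal_ofReal (by positivity), unitBallHausdorffVolume,
          measureReal_def]
        ring
    _ ≤ ∫ y in (W : Set E) ∩ closedBall p (a / 2), tentFunction p a y ∂μH[(n : ℝ)] :=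
        setIntegral_ge_of_const_le_real (hWm.inter measurableSet_closedBall) (hfin (by positivity))
          (fun y hy => half_le_tentFunction hy.2) (hint.mono_set inter_subset_left)
    _ ≤ ∫ y in (W : Set E), tentFunction p a y ∂μH[(n : ℝ)] :=
        setIntegral_mono_set hint (ae_of_all _ fun _ => tentFunction_nonneg)
          inter_subset_left.eventuallyLE

end AffineSubspace

lemma AffineSubspace.nonempty_of_finrank_direction_pos {k V P : Type*} [DivisionRing k]
    [AddCommGroup V] [Module k V] [AddTorsor V P] {W : AffineSubspace k P}
    (hW : 0 < Module.finrank k W.direction) : (W : Set P).Nonempty := by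
  rw [W.nonempty_iff_ne_bot]
  rintro rfl
  rw [AffineSubspace.direction_bot, finrank_bot] at hW
  exact hW.false

lemma measure_compl_msupport {d : ℕ} (μ : Measure (Euc d)) : μ (msupport μ)ᶜ = 0 := by
  refine measure_null_of_locally_null _ fun y hy => ?_
  simp only [msupport, mem_compl_iff, mem_ofPred_eq, not_forall, not_lt, nonpos_iff_eq_zero] at hy
  obtain ⟨s, hs, hμs⟩ := hy
  exact ⟨ball y s, mem_nhdsWithin_of_mem_nhds (ball_mem_nhds y hs), hμs⟩

lemma integral_eq_zero_of_eqOn_msupport {d : ℕ} {μ : Measure (Euc d)} {f : Euc d → ℝ}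
    (hf : EqOn f 0 (msupport μ)) : ∫ y, f y ∂μ = 0 :=
  integral_eq_zero_of_ae <| ae_iff.mpr <|
    measure_mono_null (fun _ hy hyE => hy (hf hyE)) (measure_compl_msupport μ)

lemma mul_half_pow_le_of_ball_disjoint_msupport {n d : ℕ} {μ : Measure (Euc d)}
    {W : AffineSubspace ℝ (Euc d)} (hW : Module.finrank ℝ W.direction = n) {p x₀ : Euc d}
    (hp : p ∈ W) {a R c₁ c δ : ℝ} (ha : 0 ≤ a) (hc₁ : 0 ≤ c₁) (hc : c₁ ≤ c)
    (hE : Disjoint (ball p a) (msupport μ)) (hR : closedBall p a ⊆ closedBall x₀ R)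
    (hcomp : ∀ f : Euc d → ℝ, LipschitzWith 1 f → tsupport f ⊆ closedBall x₀ R →
      |(∫ y, f y ∂μ) - c * ∫ y in (W : Set (Euc d)), f y ∂(μH[(n : ℝ)])| ≤ δ) :
    c₁ * ((a / 2) ^ (n + 1) * unitBallHausdorffVolume n) ≤ δ := by
  have hμ : ∫ y, tentFunction p a y ∂μ = 0 := integral_eq_zero_of_eqOn_msupport fun y hy =>
    tentFunction_eq_zero (not_lt.mp fun hya => hE.notMem_of_mem_right hy (mem_ball.mpr hya))
  calc c₁ * ((a / 2) ^ (n + 1) * unitBallHausdorffVolume n)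
      ≤ c * ∫ y in (W : Set (Euc d)), tentFunction p a y ∂μH[(n : ℝ)] :=
        mul_le_mul hc (W.half_pow_mul_le_setIntegral_tentFunction hW hp ha)
          (by positivity [unitBallHausdorffVolume_pos n]) (hc₁.trans hc)
    _ ≤ |(∫ y, tentFunction p a y ∂μ)
          - c * ∫ y in (W : Set (Euc d)), tentFunction p a y ∂μH[(n : ℝ)]| := by
        rw [hμ, zero_sub, abs_neg]
        exact le_abs_self _
    _ ≤ δ := hcomp _ (lipschitzWith_tentFunction p a) ((tsupport_tentFunction_subset p a).trans hR)

theorem statement7_general (n d : ℕ) (hn : 0 < n) (c₁ κ : ℝ)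
    (hc₁ : 0 < c₁) (hκ : 0 < κ) :
    ∃ ε₀ : ℝ, 0 < ε₀ ∧
      ∀ (μ : Measure (Euc d)) (x₀ : Euc d) (r : ℝ) (L : Set (Euc d)) (c ε : ℝ),
        x₀ ∈ msupport μ → 0 < r → IsNPlane n L → c₁ ≤ c → 0 ≤ ε → ε ≤ ε₀ →
        (∀ f : Euc d → ℝ, LipschitzWith 1 f → tsupport f ⊆ closedBall x₀ (4 * r) →
          |(∫ y, f y ∂μ) - c * ∫ y in L, f y ∂(μH[(n : ℝ)])| ≤ ε * (2 * r) ^ (n + 1)) →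
        ∀ x ∈ closedBall x₀ r, κ * r ≤ infDist x (msupport μ) →
          κ * r / 2 ≤ infDist x L ∧ ball x (κ * r / 2) ∩ L = ∅ := by
  have hω := unitBallHausdorffVolume_pos n
  refine ⟨c₁ * (κ / 8) ^ (n + 1) * unitBallHausdorffVolume n / 2, by positivity, ?_⟩
  rintro μ x₀ r _ c ε hx₀ hr ⟨W, rfl, hW⟩ hc - hεε₀ hcomp x hx hxE
  have hκr : κ * r ≤ r := hxE.trans ((infDist_le_dist_of_mem hx₀).trans hx)
  suffices hL : κ * r / 2 ≤ infDist x W from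
    ⟨hL, (disjoint_ball_infDist.mono_left (ball_subset_ball hL)).inter_eq⟩
  by_contra! hlt
  obtain ⟨p, hp, hxp⟩ :=
    (infDist_lt_iff (W.nonempty_of_finrank_direction_pos (hW ▸ hn))).mp hlt
  have hE : Disjoint (ball p (κ * r / 2)) (msupport μ) := disjoint_left.mpr fun y hyp hyE => by
    linarith [hxE.trans (infDist_le_dist_of_mem hyE), dist_triangle x p y, mem_ball'.mp hyp]
  have hR : closedBall p (κ * r / 2) ⊆ closedBall x₀ (4 * r) := closedBall_subset_closedBall' <| by
    linarith [dist_triangle p x x₀, dist_comm p x, mem_closedBall.mp hx]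
  have hA := mul_half_pow_le_of_ball_disjoint_msupport hW hp (by positivity) hc₁.le hc hE hR hcomp
  have hA_pos : 0 < c₁ * ((κ * r / 2 / 2) ^ (n + 1) * unitBallHausdorffVolume n) := by positivity
  have hscale : c₁ * (κ / 8) ^ (n + 1) * unitBallHausdorffVolume n / 2 * (2 * r) ^ (n + 1)
      = c₁ * ((κ * r / 2 / 2) ^ (n + 1) * unitBallHausdorffVolume n) / 2 := by
    simp only [show κ * r / 2 / 2 = κ / 8 * (2 * r) by ring, mul_pow]
    ring
  linarith [mul_le_mul_of_nonneg_right hεε₀ (by positivity : (0 : ℝ) ≤ (2 * r) ^ (n + 1))]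

/-- if `d_{B(x₀,4r)}(μ, c ℋⁿ|_L) ≤ ε (2r)^{n+1}` with `ε ≤ ε₀` small and
`c ≥ c₁ > 0`, then any `x ∈ B(x₀,r)` with `dist(x, supp μ) ≥ κ r` satisfies
`dist(x,L) ≥ κr/2`; in particular `B(x, κr/2) ∩ L = ∅`. -/
theorem statement7 (n d : ℕ) (hn : 0 < n) (hnd : n < d) (c₁ κ : ℝ)
    (hc₁ : 0 < c₁) (hκ : 0 < κ) :
    ∃ ε₀ : ℝ, 0 < ε₀ ∧
      ∀ (μ : Measure (Euc d)) (x₀ : Euc d) (r : ℝ) (L : Set (Euc d)) (c ε : ℝ),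
        x₀ ∈ msupport μ → 0 < r → IsNPlane n L → c₁ ≤ c → 0 ≤ ε → ε ≤ ε₀ →
        (∀ f : Euc d → ℝ, LipschitzWith 1 f → tsupport f ⊆ closedBall x₀ (4 * r) →
          |(∫ y, f y ∂μ) - c * ∫ y in L, f y ∂(μH[(n : ℝ)])| ≤ ε * (2 * r) ^ (n + 1)) →
        ∀ x ∈ closedBall x₀ r, κ * r ≤ infDist x (msupport μ) →
          κ * r / 2 ≤ infDist x L ∧ ball x (κ * r / 2) ∩ L = ∅ :=
  statement7_general n d hn c₁ κ hc₁ hκ
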